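/- Let F be a field, n ≥ 3, r ≥ 0, and for each 1 ≤ j ≤ n let x_{1,j}, …, x_{r,j} ∈ F^{I_j} be linearly independent, with a_1, …, a_r ∈ F \ {0}. If A = ∑_{i=1}^r a_i x_{i,1} ⊗ ⋯ ⊗ x_{i,n} = ∑_{j=1}^r b_j y_{j,1} ⊗ ⋯ ⊗ y_{j,n} with all b_j ≠ 0, then the second expression is a permutation of the first: there is a permutation π of [r] such that b_{π(i)} y_{π(i),1} ⊗ ⋯ ⊗ y_{π(i),n} = a_i x_{i,1} ⊗ ⋯ ⊗ x_{i,n} for each i. -/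

import Mathlib

open scoped TensorProduct


open Submodule in
lemma exists_dual_family {F : Type*} [Field F] {V : Type*} [AddCommGroup V] [Module F V]
    {ι : Type*} [Fintype ι] [DecidableEq ι] {x : ι → V} (hx : LinearIndependent F x) :
    ∃ φ : ι → (V →ₗ[F] F),
      (∀ i k, φ i (x k) = if k = i then 1 else 0) ∧
      (∀ v ∈ Submodule.span F (Set.range x), (∑ i, φ i v • x i) = v) := by
  obtain ⟨W, hW⟩ := Submodule.exists_isCompl (Submodule.span F (Set.range x))
  set p := Submodule.span F (Set.range x) with hp
  let P := p.linearProjOfIsCompl W hW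
  let B := Module.Basis.span hx
  refine ⟨fun i => (B.coord i).comp P, fun i k => ?_, fun v hv => ?_⟩
  · have h1 : P (x k) = B k := by
      have : P (x k) = ⟨x k, Submodule.subset_span ⟨k, rfl⟩⟩ :=
        Submodule.linearProjOfIsCompl_apply_left hW ⟨x k, Submodule.subset_span ⟨k, rfl⟩⟩
      rw [this]
      ext
      simp [B, Module.Basis.span_apply]
    simp [h1, B, Module.Basis.repr_self, Finsupp.single_apply]
  · have h1 : P v = ⟨v, hv⟩ := Submodule.linearProjOfIsCompl_apply_left hW ⟨v, hv⟩
    have h2 : (∑ i, B.repr ⟨v, hv⟩ i • B i) = ⟨v, hv⟩ := B.sum_repr ⟨v, hv⟩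
    calc (∑ i, ((B.coord i).comp P) v • x i)
        = ∑ i, B.repr ⟨v, hv⟩ i • x i := by
          refine Finset.sum_congr rfl fun i _ => ?_
          rw [LinearMap.comp_apply, h1]
          rfl
      _ = ((∑ i, B.repr ⟨v, hv⟩ i • B i : p) : V) := by
          rw [AddSubmonoidClass.coe_finset_sum]
          refine Finset.sum_congr rfl fun i _ => ?_
          rw [SetLike.val_smul, Module.Basis.span_apply]
      _ = v := by rw [h2]

lemma mem_span_of_dual {F : Type*} [Field F] {V : Type*} [AddCommGroup V] [Module F V]
    (U : Submodule F V) (v : V)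
    (h : ∀ g : V →ₗ[F] F, (∀ u ∈ U, g u = 0) → g v = 0) : v ∈ U := by
  by_contra hv
  have h1 : U.mkQ v ≠ 0 := by
    simpa [Submodule.mkQ_apply, Submodule.Quotient.mk_eq_zero] using hv
  have h2 : ¬ ∀ φ : Module.Dual F (V ⧸ U), φ (U.mkQ v) = 0 := fun hall =>
    h1 ((Module.forall_dual_apply_eq_zero_iff F _).mp hall)
  push_neg at h2
  obtain ⟨g', hg'⟩ := h2
  exact hg' (h (g'.comp U.mkQ) fun u hu => by
    simp [Submodule.mkQ_apply, (Submodule.Quotient.mk_eq_zero U).mpr hu])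

theorem stmt_9 (F : Type*) [Field F] (n r : ℕ) (hn : 3 ≤ n)
    (I : Fin n → Type*) (x : Fin r → (j : Fin n) → (I j → F))
    (hli : ∀ j : Fin n, LinearIndependent F (fun i : Fin r => x i j))
    (a : Fin r → F) (ha : ∀ i, a i ≠ 0)
    (b : Fin r → F) (hb : ∀ i, b i ≠ 0)
    (y : Fin r → (j : Fin n) → (I j → F))
    (heq : (∑ i : Fin r, a i • ⨂ₜ[F] j, x i j) = ∑ i : Fin r, b i • ⨂ₜ[F] j, y i j) :
    ∃ π : Equiv.Perm (Fin r), ∀ i : Fin r,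
      b (π i) • (⨂ₜ[F] j, y (π i) j) = a i • ⨂ₜ[F] j, x i j := by
  classical
  have key : ∀ f : (m : Fin n) → ((I m → F) →ₗ[F] F),
      (∑ i, a i * ∏ m, f m (x i m)) = ∑ j, b j * ∏ m, f m (y j m) := by
    intro f
    have := congrArg (PiTensorProduct.lift ((MultilinearMap.mkPiAlgebra F (Fin n) F).compLinearMap f)) heq
    simpa [map_sum, map_smul, PiTensorProduct.lift.tprod, smul_eq_mul] using this
  choose φ hφ1 hφ2 using fun m => exists_dual_family (hli m)
  -- step C : x i m ∈ span of y's in mode m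
  have hxmem : ∀ (m : Fin n) (i : Fin r), x i m ∈ Submodule.span F (Set.range (fun j => y j m)) := by
    intro m i
    refine mem_span_of_dual _ _ fun g hg => ?_
    have hg' : ∀ j, g (y j m) = 0 := fun j => hg _ (Submodule.subset_span ⟨j, rfl⟩)
    obtain ⟨m'', hm''⟩ : ∃ m'' : Fin n, m'' ≠ m := by
      have : Nontrivial (Fin n) := Fin.nontrivial_iff_two_le.mpr (by omega)
      exact exists_ne m
    set f : (m' : Fin n) → ((I m' → F) →ₗ[F] F) := Function.update (fun m' => φ m' i) m g with hf
    have hfm : f m = g := by rw [hf]; simp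
    have hfm' : ∀ m' ≠ m, f m' = φ m' i := fun m' h => by rw [hf]; simp [Function.update_of_ne h]
    have hk := key f
    have hL : (∑ i', a i' * ∏ m', f m' (x i' m')) = a i * g (x i m) := by
      rw [Finset.sum_eq_single i]
      · congr 1
        rw [← Finset.mul_prod_erase Finset.univ _ (Finset.mem_univ m), hfm]
        rw [Finset.prod_eq_one fun m' hm' => ?_, mul_one]
        rw [hfm' m' (Finset.ne_of_mem_erase hm'), hφ1, if_pos rfl]
      · intro i' _ hi'
        rw [← Finset.mul_prod_erase Finset.univ _ (Finset.mem_univ m)]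
        rw [Finset.prod_eq_zero (Finset.mem_erase.mpr ⟨hm'', Finset.mem_univ m''⟩)]
        · ring
        · rw [hfm' m'' hm'', hφ1, if_neg hi']
      · intro h
        exact absurd (Finset.mem_univ i) h
    have hR : (∑ j, b j * ∏ m', f m' (y j m')) = 0 := by
      refine Finset.sum_eq_zero fun j _ => ?_
      rw [← Finset.mul_prod_erase Finset.univ _ (Finset.mem_univ m), hfm, hg' j]
      ring
    rw [hL, hR] at hk
    exact (mul_eq_zero.mp hk).resolve_left (ha i)
  -- span equality in each mode
  have hspan : ∀ m : Fin n, Submodule.span F (Set.range (fun i => x i m))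
      = Submodule.span F (Set.range (fun j => y j m)) := by
    intro m
    have hle : Submodule.span F (Set.range (fun i => x i m))
        ≤ Submodule.span F (Set.range (fun j => y j m)) := by
      rw [Submodule.span_le]
      rintro _ ⟨i, rfl⟩
      exact hxmem m i
    have hfd : FiniteDimensional F (Submodule.span F (Set.range (fun j => y j m))) :=
      FiniteDimensional.span_of_finite F (Set.finite_range _)
    refine Submodule.eq_of_le_of_finrank_le hle ?_
    have h1 : Module.finrank F (Submodule.span F (Set.range (fun j => y j m))) ≤ r := by
      refine (finrank_span_le_card _).trans ?_
      rw [Set.toFinset_card]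
      exact (Fintype.card_range_le _).trans (by simp)
    have h2 : Module.finrank F (Submodule.span F (Set.range (fun i => x i m))) = r := by
      rw [finrank_span_eq_card (hli m), Fintype.card_fin]
    omega
  have hymem : ∀ (m : Fin n) (j : Fin r),
      y j m ∈ Submodule.span F (Set.range (fun i => x i m)) := by
    intro m j
    rw [hspan m]
    exact Submodule.subset_span ⟨j, rfl⟩
  -- coordinate matrices
  set M : (m : Fin n) → Matrix (Fin r) (Fin r) F :=
    fun m => Matrix.of fun i j => φ m i (y j m) with hM
  have hMapply : ∀ m i j, M m i j = φ m i (y j m) := fun m i j => rfl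
  have hyx : ∀ m j, y j m = ∑ i, M m i j • x i m := fun m j =>
    (hφ2 m (y j m) (hymem m j)).symm
  -- invertibility of M m
  have hMunit : ∀ m, IsUnit (M m) := by
    intro m
    rw [← Matrix.mulVec_surjective_iff_isUnit]
    have hsur : ∀ i : Fin r, ∃ t, (M m).mulVec t = Pi.single i 1 := by
      intro i
      obtain ⟨t, ht⟩ := (Submodule.mem_span_range_iff_exists_fun F).mp (hxmem m i)
      refine ⟨t, ?_⟩
      funext i'
      have h3 := congrArg (φ m i') ht
      simp only [map_sum, map_smul, smul_eq_mul] at h3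
      rw [Matrix.mulVec, dotProduct]
      calc (∑ j, M m i' j * t j) = ∑ j, t j * φ m i' (y j m) := by
            refine Finset.sum_congr rfl fun j _ => ?_
            rw [hMapply, mul_comm]
        _ = (Pi.single i (1:F) : Fin r → F) i' := by
            rw [h3, hφ1]
            simp [Pi.single_apply, eq_comm]
    have htop : ⊤ ≤ LinearMap.range (M m).mulVecLin := by
      rw [← (Pi.basisFun F (Fin r)).span_eq]
      refine Submodule.span_le.mpr ?_
      rintro _ ⟨i, rfl⟩
      obtain ⟨t, ht⟩ := hsur i
      exact ⟨t, by simpa using ht⟩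
    intro w
    obtain ⟨t, ht⟩ := LinearMap.range_eq_top.mp (top_le_iff.mp htop) w
    exact ⟨t, ht⟩
  -- combinatorial scalar equations
  have hE : ∀ κ : Fin n → Fin r, (∑ j, b j * ∏ m, M m (κ m) j)
      = ∑ i, a i * ∏ m, ((if i = κ m then 1 else 0 : F)) := by
    intro κ
    have hk := key (fun m => φ m (κ m))
    calc (∑ j, b j * ∏ m, M m (κ m) j)
        = ∑ j, b j * ∏ m, φ m (κ m) (y j m) := rfl
      _ = ∑ i, a i * ∏ m, φ m (κ m) (x i m) := hk.symm
      _ = ∑ i, a i * ∏ m, ((if i = κ m then 1 else 0 : F)) := by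
          refine Finset.sum_congr rfl fun i _ => ?_
          congr 1
          exact Finset.prod_congr rfl fun m _ => hφ1 m (κ m) i
  set mode0 : Fin n := ⟨0, by omega⟩ with hmode0
  have pairStep : ∀ m1 : Fin n, m1 ≠ mode0 → ∀ l : Fin r,
      ∃ j0, M mode0 l j0 ≠ 0 ∧ (∀ i, i ≠ l → M mode0 i j0 = 0) ∧
        M m1 l j0 ≠ 0 ∧ (∀ k, k ≠ l → M m1 k j0 = 0) := by
    intro m1 hm1 l
    obtain ⟨m2, hm2a, hm2b⟩ : ∃ m2 : Fin n, m2 ≠ mode0 ∧ m2 ≠ m1 := by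
      by_cases h : m1 = ⟨1, by omega⟩
      · exact ⟨⟨2, by omega⟩, by simp [hmode0, Fin.ext_iff], by simp [h, Fin.ext_iff]⟩
      · exact ⟨⟨1, by omega⟩, by simp [hmode0, Fin.ext_iff], fun hc => h hc.symm⟩
    set S : Finset (Fin n) := (Finset.univ.erase mode0).erase m1 with hS
    have hm1mem : m1 ∈ Finset.univ.erase mode0 := Finset.mem_erase.mpr ⟨hm1, Finset.mem_univ m1⟩
    have hm2S : m2 ∈ S := Finset.mem_erase.mpr ⟨hm2b, Finset.mem_erase.mpr ⟨hm2a, Finset.mem_univ m2⟩⟩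
    set c : Fin r → F := fun j => b j * ∏ m ∈ S, M m l j with hc
    set κik : Fin r → Fin r → (Fin n → Fin r) :=
      fun i k m => if m = mode0 then i else if m = m1 then k else l with hκ
    have hP : ∀ i k, (∑ j, c j * (M mode0 i j * M m1 k j))
        = if i = l ∧ k = l then a l else 0 := by
      intro i k
      have h4 := hE (κik i k)
      have hprod : ∀ (g : (m : Fin n) → Fin r → F),
          (∏ m, g m (κik i k m)) = g mode0 i * (g m1 k * ∏ m ∈ S, g m l) := by
        intro g
        rw [← Finset.mul_prod_erase Finset.univ _ (Finset.mem_univ mode0),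
          ← Finset.mul_prod_erase _ _ hm1mem]
        have e0 : κik i k mode0 = i := by simp [hκ]
        have e1 : κik i k m1 = k := by simp [hκ, hm1]
        rw [e0, e1]
        congr 1
        congr 1
        refine Finset.prod_congr rfl fun m hm => ?_
        have h5 := Finset.mem_erase.mp hm
        have h6 := Finset.mem_erase.mp h5.2
        have : κik i k m = l := by simp [hκ, h5.1, h6.1]
        rw [this]
      have hLHS : (∑ j, b j * ∏ m, M m (κik i k m) j)
          = ∑ j, c j * (M mode0 i j * M m1 k j) := by
        refine Finset.sum_congr rfl fun j _ => ?_
        rw [hprod (fun m v => M m v j), hc]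
        ring
      have hRHS : (∑ i', a i' * ∏ m, ((if i' = κik i k m then 1 else 0 : F)))
          = if i = l ∧ k = l then a l else 0 := by
        have hp2 : ∀ i' : Fin r, (∏ m, ((if i' = κik i k m then 1 else 0 : F)))
            = (if i' = i then 1 else 0) * ((if i' = k then 1 else 0) *
                ∏ m ∈ S, ((if i' = l then 1 else 0 : F))) :=
          fun i' => hprod (fun m v => if i' = v then 1 else 0)
        rw [Finset.sum_congr rfl fun i' _ => by rw [hp2 i']]
        rw [Finset.sum_eq_single l]
        · have hone : (∏ m ∈ S, ((if l = l then 1 else 0 : F))) = 1 := by simp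
          rw [hone]
          rcases eq_or_ne i l with h7 | h7 <;> rcases eq_or_ne k l with h8 | h8
          · simp [h7, h8]
          · simp [h7, h8, Ne.symm h8]
          · simp [h7, h8, Ne.symm h7]
          · simp [h7, h8, Ne.symm h7, Ne.symm h8]
        · intro i' _ hi'
          rw [Finset.prod_eq_zero hm2S (by rw [if_neg hi'])]
          ring
        · intro h
          exact absurd (Finset.mem_univ l) h
      rw [hLHS] at h4
      rw [h4, hRHS]
    -- inverse matrices
    set N0 : Matrix (Fin r) (Fin r) F := (M mode0)⁻¹ with hN0
    set N1 : Matrix (Fin r) (Fin r) F := (M m1)⁻¹ with hN1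
    have hNM0 : ∀ j j', (∑ i, N0 j i * M mode0 i j') = if j = j' then 1 else 0 := by
      intro j j'
      have h8 := Matrix.nonsing_inv_mul (M mode0)
        ((Matrix.isUnit_iff_isUnit_det _).mp (hMunit mode0))
      calc (∑ i, N0 j i * M mode0 i j') = (N0 * M mode0) j j' := (Matrix.mul_apply).symm
        _ = (1 : Matrix (Fin r) (Fin r) F) j j' := by rw [hN0, h8]
        _ = if j = j' then 1 else 0 := Matrix.one_apply
    have hNM1 : ∀ j j', (∑ k, N1 j k * M m1 k j') = if j = j' then 1 else 0 := by
      intro j j'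
      have h8 := Matrix.nonsing_inv_mul (M m1)
        ((Matrix.isUnit_iff_isUnit_det _).mp (hMunit m1))
      calc (∑ k, N1 j k * M m1 k j') = (N1 * M m1) j j' := (Matrix.mul_apply).symm
        _ = (1 : Matrix (Fin r) (Fin r) F) j j' := by rw [hN1, h8]
        _ = if j = j' then 1 else 0 := Matrix.one_apply
    have star1 : ∀ j k, c j * M m1 k j = if k = l then a l * N0 j l else 0 := by
      intro j k
      have h9 : (∑ i', N0 j i' * (∑ j', c j' * (M mode0 i' j' * M m1 k j')))
          = c j * M m1 k j := by
        calc (∑ i', N0 j i' * (∑ j', c j' * (M mode0 i' j' * M m1 k j')))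
            = ∑ i', ∑ j', (c j' * M m1 k j') * (N0 j i' * M mode0 i' j') := by
              refine Finset.sum_congr rfl fun i' _ => ?_
              rw [Finset.mul_sum]
              exact Finset.sum_congr rfl fun j' _ => by ring
          _ = ∑ j', ∑ i', (c j' * M m1 k j') * (N0 j i' * M mode0 i' j') := Finset.sum_comm
          _ = ∑ j', (c j' * M m1 k j') * (∑ i', N0 j i' * M mode0 i' j') := by
              refine Finset.sum_congr rfl fun j' _ => (Finset.mul_sum _ _ _).symm
          _ = ∑ j', if j = j' then c j' * M m1 k j' else 0 := by
              refine Finset.sum_congr rfl fun j' _ => ?_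
              rw [hNM0, mul_ite, mul_one, mul_zero]
          _ = c j * M m1 k j := by rw [Finset.sum_ite_eq]; simp
      have h10 : (∑ i', N0 j i' * ((if i' = l ∧ k = l then a l else 0 : F)))
          = if k = l then a l * N0 j l else 0 := by
        by_cases hk : k = l
        · simp only [hk, and_true, if_true, mul_ite, mul_zero]
          rw [Finset.sum_ite_eq' Finset.univ l (fun i' => N0 j i' * a l)]
          simp [mul_comm]
        · simp [hk]
      have h12 : (∑ i', N0 j i' * (∑ j', c j' * (M mode0 i' j' * M m1 k j')))
          = ∑ i', N0 j i' * ((if i' = l ∧ k = l then a l else 0 : F)) :=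
        Finset.sum_congr rfl fun i' _ => by rw [hP i' k]
      rw [h9, h10] at h12
      exact h12
    have star2 : ∀ j i, c j * M mode0 i j = if i = l then a l * N1 j l else 0 := by
      intro j i
      have h9 : (∑ k', N1 j k' * (∑ j', c j' * (M mode0 i j' * M m1 k' j')))
          = c j * M mode0 i j := by
        calc (∑ k', N1 j k' * (∑ j', c j' * (M mode0 i j' * M m1 k' j')))
            = ∑ k', ∑ j', (c j' * M mode0 i j') * (N1 j k' * M m1 k' j') := by
              refine Finset.sum_congr rfl fun k' _ => ?_
              rw [Finset.mul_sum]
              exact Finset.sum_congr rfl fun j' _ => by ring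
          _ = ∑ j', ∑ k', (c j' * M mode0 i j') * (N1 j k' * M m1 k' j') := Finset.sum_comm
          _ = ∑ j', (c j' * M mode0 i j') * (∑ k', N1 j k' * M m1 k' j') := by
              refine Finset.sum_congr rfl fun j' _ => (Finset.mul_sum _ _ _).symm
          _ = ∑ j', if j = j' then c j' * M mode0 i j' else 0 := by
              refine Finset.sum_congr rfl fun j' _ => ?_
              rw [hNM1, mul_ite, mul_one, mul_zero]
          _ = c j * M mode0 i j := by rw [Finset.sum_ite_eq]; simp
      have h10 : (∑ k', N1 j k' * ((if i = l ∧ k' = l then a l else 0 : F)))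
          = if i = l then a l * N1 j l else 0 := by
        by_cases hi : i = l
        · simp only [hi, true_and, if_true, mul_ite, mul_zero]
          rw [Finset.sum_ite_eq' Finset.univ l (fun k' => N1 j k' * a l)]
          simp [mul_comm]
        · simp [hi]
      have h12 : (∑ k', N1 j k' * (∑ j', c j' * (M mode0 i j' * M m1 k' j')))
          = ∑ k', N1 j k' * ((if i = l ∧ k' = l then a l else 0 : F)) :=
        Finset.sum_congr rfl fun k' _ => by rw [hP i k']
      rw [h9, h10] at h12
      exact h12
    have hll : (∑ j, c j * (M mode0 l j * M m1 l j)) = a l := by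
      rw [hP l l]
      simp
    obtain ⟨j0, -, hj0⟩ := Finset.exists_ne_zero_of_sum_ne_zero
      (s := Finset.univ) (f := fun j => c j * (M mode0 l j * M m1 l j))
      (by rw [hll]; exact ha l)
    have hc0 : c j0 ≠ 0 := fun h => hj0 (by rw [h]; ring)
    have hM0l : M mode0 l j0 ≠ 0 := fun h => hj0 (by rw [h]; ring)
    have hM1l : M m1 l j0 ≠ 0 := fun h => hj0 (by rw [h]; ring)
    refine ⟨j0, hM0l, fun i hi => ?_, hM1l, fun k hk => ?_⟩
    · have h13 := star2 j0 i
      rw [if_neg hi] at h13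
      exact (mul_eq_zero.mp h13).resolve_left hc0
    · have h13 := star1 j0 k
      rw [if_neg hk] at h13
      exact (mul_eq_zero.mp h13).resolve_left hc0
  -- choose τ via the pair (mode0, mode1)
  have mode1ne : (⟨1, by omega⟩ : Fin n) ≠ mode0 := by simp [hmode0, Fin.ext_iff]
  choose τ hτ1 hτ2 hτ3 hτ4 using pairStep ⟨1, by omega⟩ mode1ne
  -- uniqueness of a column supported at l
  have colUnique : ∀ (j j' l : Fin r), M mode0 l j ≠ 0 → (∀ i, i ≠ l → M mode0 i j = 0) →
      M mode0 l j' ≠ 0 → (∀ i, i ≠ l → M mode0 i j' = 0) → j = j' := by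
    intro j j' l h1 h2 h3 h4
    by_contra hne
    have hinj : Function.Injective (M mode0).mulVec :=
      Matrix.mulVec_injective_iff_isUnit.mpr (hMunit mode0)
    set v : Fin r → F := (M mode0 l j') • (Pi.single j (1:F) : Fin r → F)
      - (M mode0 l j) • (Pi.single j' (1:F) : Fin r → F) with hv
    have hveq : (M mode0).mulVec v = (M mode0).mulVec 0 := by
      rw [Matrix.mulVec_zero, hv, Matrix.mulVec_sub, Matrix.mulVec_smul, Matrix.mulVec_smul,
        Matrix.mulVec_single, Matrix.mulVec_single]
      funext i
      simp only [Pi.sub_apply, Pi.smul_apply, smul_eq_mul, mul_one, Pi.zero_apply, MulOpposite.op_one,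
        one_smul, Matrix.col_apply]
      by_cases hil : i = l
      · subst hil; ring
      · rw [h2 i hil, h4 i hil]; ring
    have hv0 : v = 0 := hinj hveq
    have : v j = M mode0 l j' := by
      rw [hv]
      simp [Pi.single_apply, hne, Ne.symm hne]
    rw [hv0] at this
    exact h3 this.symm
  have hτinj : Function.Injective τ := by
    intro l l' h
    by_contra hne
    exact hτ1 l (by rw [h]; exact hτ2 l' l hne)
  have hτbij : Function.Bijective τ := Finite.injective_iff_bijective.mp hτinj
  -- all modes are supported at l in column τ l
  have hall : ∀ (m : Fin n) (l : Fin r), M m l (τ l) ≠ 0 ∧ ∀ i, i ≠ l → M m i (τ l) = 0 := by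
    intro m l
    by_cases hm : m = mode0
    · subst hm; exact ⟨hτ1 l, hτ2 l⟩
    · obtain ⟨j0, k1, k2, k3, k4⟩ := pairStep m hm l
      have hj0 : j0 = τ l := colUnique j0 (τ l) l k1 k2 (hτ1 l) (hτ2 l)
      rw [← hj0]
      exact ⟨k3, k4⟩
  have hyτ : ∀ (m : Fin n) (l : Fin r), y (τ l) m = M m l (τ l) • x l m := by
    intro m l
    rw [hyx m (τ l), Finset.sum_eq_single l]
    · intro i _ hi
      rw [(hall m l).2 i hi, zero_smul]
    · intro h
      exact absurd (Finset.mem_univ l) h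
  have hcoef : ∀ l, b (τ l) * ∏ m, M m l (τ l) = a l := by
    intro l
    have h4 := hE (fun _ => l)
    have hR : (∑ i, a i * ∏ _m : Fin n, ((if i = l then 1 else 0 : F))) = a l := by
      rw [Finset.sum_eq_single l]
      · simp
      · intro i _ hi
        rw [if_neg hi, Finset.prod_const, Finset.card_univ, Fintype.card_fin,
          zero_pow (by omega : n ≠ 0), mul_zero]
      · intro h
        exact absurd (Finset.mem_univ l) h
    have hL : (∑ j, b j * ∏ m, M m l j) = b (τ l) * ∏ m, M m l (τ l) := by
      rw [Finset.sum_eq_single (τ l)]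
      · intro j _ hj
        obtain ⟨l', rfl⟩ := hτbij.2 j
        have hl' : l' ≠ l := fun h => hj (by rw [h])
        rw [Finset.prod_eq_zero (Finset.mem_univ mode0) ((hall mode0 l').2 l (Ne.symm hl'))]
        ring
      · intro h
        exact absurd (Finset.mem_univ (τ l)) h
    rw [hL, hR] at h4
    exact h4
  refine ⟨Equiv.ofBijective τ hτbij, fun l => ?_⟩
  show b (τ l) • (⨂ₜ[F] m, y (τ l) m) = a l • ⨂ₜ[F] m, x l m
  calc b (τ l) • (⨂ₜ[F] m, y (τ l) m)
      = b (τ l) • (⨂ₜ[F] m, M m l (τ l) • x l m) := by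
        rw [show (fun m => y (τ l) m) = fun m => M m l (τ l) • x l m from
          funext fun m => hyτ m l]
    _ = b (τ l) • ((∏ m, M m l (τ l)) • ⨂ₜ[F] m, x l m) := by
        rw [MultilinearMap.map_smul_univ]
    _ = a l • ⨂ₜ[F] m, x l m := by rw [smul_smul, hcoef l]
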